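/- Let pᵢ(t) = aᵢ + t·vᵢ (i = 1,…,4) be four points moving along straight lines in the plane at unit speed (‖vᵢ‖ = 1). Then either the four points lie on a common circle or line at every time t, or the set of times t at which they lie on a common circle or line has at most 3 elements. -/

import Mathlib

/-!
A set of points of the plane lies on a circle or a line iff it lies in the zero set of a
nonzero "generalized circle" `A ‖x‖² + ⟪b, x⟫ + c`. For four points this says that the in-circle
matrix with rows `(‖pᵢ‖², xᵢ, yᵢ, 1)` is singular. For `pᵢ = aᵢ + t vᵢ` with `‖vᵢ‖ = 1` the first
column is `‖aᵢ‖² + 2t⟪aᵢ, vᵢ⟫ + t²`; the common `t²` is removed by subtracting `t²` times the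
column of ones, after which every entry is affine in `t` and the last column is constant. The
determinant is therefore a polynomial of degree at most `3` in `t`: it either vanishes
identically or has at most three roots.
-/

noncomputable section

/-- Points of the Euclidean plane. -/
abbrev Pt := EuclideanSpace ℝ (Fin 2)

/-- Four points lie on a common circle or on a common line. -/
def OnCommonCircleOrLine (p : Fin 4 → Pt) : Prop :=
  (∃ c : Pt, ∃ ρ : ℝ, 0 < ρ ∧ ∀ i, dist (p i) c = ρ) ∨ Collinear ℝ (Set.range p)

open Module Polynomial EuclideanGeometry Matrix
open scoped RealInnerProductSpace

theorem Matrix.natDegree_det_le_sum {n R : Type*} [Fintype n] [DecidableEq n] [CommRing R]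
    (M : Matrix n n R[X]) (d : n → ℕ) (h : ∀ i j, (M i j).natDegree ≤ d j) :
    M.det.natDegree ≤ ∑ j, d j := by
  rw [det_apply']
  refine natDegree_sum_le_of_forall_le _ _ fun σ _ => ?_
  calc ((Equiv.Perm.sign σ : ℤ) * ∏ j, M (σ j) j : R[X]).natDegree
      ≤ (∏ j, M (σ j) j).natDegree := natDegree_mul_le.trans (by rw [natDegree_intCast, zero_add])
    _ ≤ ∑ j, (M (σ j) j).natDegree := natDegree_prod_le _ _
    _ ≤ ∑ j, d j := Finset.sum_le_sum fun j _ => h _ _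

section InnerProductSpace

variable {E : Type*} [NormedAddCommGroup E] [InnerProductSpace ℝ E]

theorem dist_sq_eq_of_quadric_eq_zero {A c : ℝ} (hA : A ≠ 0) {b x : E}
    (hx : A * ‖x‖ ^ 2 + ⟪b, x⟫ + c = 0) :
    dist x (-((2 * A)⁻¹ • b)) ^ 2 = ‖(2 * A)⁻¹ • b‖ ^ 2 - c / A := by
  rw [dist_eq_norm, sub_neg_eq_add, norm_add_sq_real, inner_smul_right, real_inner_comm]
  field_simp
  linear_combination hx

theorem EuclideanGeometry.Cospherical.exists_quadric {s : Set E} (h : Cospherical s) :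
    ∃ A : ℝ, ∃ b : E, ∃ c : ℝ, (A, b, c) ≠ 0 ∧ ∀ x ∈ s, A * ‖x‖ ^ 2 + ⟪b, x⟫ + c = 0 := by
  obtain ⟨center, r, h⟩ := h
  refine ⟨1, (-2 : ℝ) • center, ‖center‖ ^ 2 - r ^ 2, by simp, fun x hx => ?_⟩
  have hr : ‖x - center‖ ^ 2 = r ^ 2 := by rw [← dist_eq_norm, h x hx]
  rw [norm_sub_sq_real, real_inner_comm] at hr
  rw [real_inner_smul_left]
  linear_combination hr

theorem exists_ne_zero_inner_eq_zero (hE : 1 < finrank ℝ E) (v : E) :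
    ∃ n ≠ (0 : E), ⟪n, v⟫ = 0 := by
  have : FiniteDimensional ℝ E := Module.finite_of_finrank_pos (by omega)
  have hker : LinearMap.ker (innerₛₗ ℝ v) ≠ ⊥ :=
    LinearMap.ker_ne_bot_of_finrank_lt (by rwa [finrank_self])
  obtain ⟨n, hn, hn0⟩ := Submodule.exists_mem_ne_zero_of_ne_bot hker
  exact ⟨n, hn0, by rwa [real_inner_comm, ← innerₛₗ_apply_apply, ← LinearMap.mem_ker]⟩

theorem Collinear.exists_forall_inner_eq (hE : 1 < finrank ℝ E) {s : Set E}
    (h : Collinear ℝ s) : ∃ n ≠ (0 : E), ∃ c : ℝ, ∀ x ∈ s, ⟪n, x⟫ = c := by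
  obtain ⟨p₀, v, hv⟩ := (collinear_iff_exists_forall_eq_smul_vadd s).1 h
  obtain ⟨n, hn, hnv⟩ := exists_ne_zero_inner_eq_zero hE v
  refine ⟨n, hn, ⟪n, p₀⟫, fun x hx => ?_⟩
  obtain ⟨r, rfl⟩ := hv x hx
  simp [inner_add_right, inner_smul_right, hnv]

end InnerProductSpace

section Plane

variable {E : Type*} [NormedAddCommGroup E] [InnerProductSpace ℝ E] [Fact (finrank ℝ E = 2)]

theorem collinear_of_forall_inner_eq {n : E} (hn : n ≠ 0) {c : ℝ} {s : Set E}
    (hs : ∀ x ∈ s, ⟪n, x⟫ = c) : Collinear ℝ s := by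
  have hle : vectorSpan ℝ s ≤ (ℝ ∙ n)ᗮ := by
    rw [vectorSpan_def, Submodule.span_le]
    rintro _ ⟨x, hx, y, hy, rfl⟩
    simp [Submodule.mem_orthogonal_singleton_iff_inner_right, inner_sub_right, hs x hx, hs y hy]
  have : FiniteDimensional ℝ E := .of_fact_finrank_eq_succ 1
  calc Module.rank ℝ (vectorSpan ℝ s) ≤ Module.rank ℝ (ℝ ∙ n)ᗮ := Submodule.rank_mono hle
    _ = 1 := by
      rw [← finrank_eq_rank, Submodule.finrank_orthogonal_span_singleton (n := 1) hn, Nat.cast_one]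

theorem cospherical_or_collinear_iff_exists_quadric {s : Set E} :
    Cospherical s ∨ Collinear ℝ s ↔
      ∃ A : ℝ, ∃ b : E, ∃ c : ℝ, (A, b, c) ≠ 0 ∧ ∀ x ∈ s, A * ‖x‖ ^ 2 + ⟪b, x⟫ + c = 0 := by
  have hE : 1 < finrank ℝ E := by rw [Fact.out (p := finrank ℝ E = 2)]; norm_num
  constructor
  · rintro (h | h)
    · exact h.exists_quadric
    · obtain ⟨n, hn, c, h⟩ := h.exists_forall_inner_eq hE
      exact ⟨0, n, -c, by simp [hn], fun x hx => by simp [h x hx]⟩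
  · rintro ⟨A, b, c, hne, h⟩
    by_cases hA : A = 0
    · subst hA
      right
      by_cases hb : b = 0
      · subst hb
        have hc : c ≠ 0 := by simpa using hne
        convert collinear_empty (k := ℝ) (P := E)
        exact Set.eq_empty_of_forall_notMem fun x hx => hc (by simpa using h x hx)
      · exact collinear_of_forall_inner_eq hb (c := -c) fun x hx => by
          linear_combination (by simpa using h x hx : ⟪b, x⟫ + c = 0)
    · left
      refine ⟨-((2 * A)⁻¹ • b), √(‖(2 * A)⁻¹ • b‖ ^ 2 - c / A), fun x hx => ?_⟩
      rw [← dist_sq_eq_of_quadric_eq_zero hA (h x hx), Real.sqrt_sq dist_nonneg]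

end Plane

theorem onCommonCircleOrLine_iff_cospherical_or_collinear (p : Fin 4 → Pt) :
    OnCommonCircleOrLine p ↔ Cospherical (Set.range p) ∨ Collinear ℝ (Set.range p) := by
  constructor
  · rintro (⟨c, ρ, -, h⟩ | h)
    · exact .inl ⟨c, ρ, Set.forall_mem_range.2 h⟩
    · exact .inr h
  · rintro (⟨c, ρ, h⟩ | h)
    · rcases lt_or_ge 0 ρ with hρ | hρ
      · exact .inl ⟨c, ρ, hρ, fun i => h _ (Set.mem_range_self i)⟩
      · refine .inr ((collinear_singleton ℝ c).subset ?_)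
        rintro _ ⟨i, rfl⟩
        exact dist_le_zero.1 (h _ (Set.mem_range_self i) ▸ hρ)
    · exact .inr h

instance : Fact (finrank ℝ Pt = 2) := ⟨finrank_euclideanSpace_fin⟩

def inCircleMatrix (p : Fin 4 → Pt) : Matrix (Fin 4) (Fin 4) ℝ :=
  Matrix.of fun i => ![‖p i‖ ^ 2, p i 0, p i 1, 1]

theorem inCircleMatrix_mulVec (p : Fin 4 → Pt) (A : ℝ) (b : Pt) (c : ℝ) :
    inCircleMatrix p *ᵥ ![A, b 0, b 1, c] = fun i => A * ‖p i‖ ^ 2 + ⟪b, p i⟫ + c := by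
  ext i
  simp [inCircleMatrix, mulVec, dotProduct, Fin.sum_univ_four, PiLp.inner_apply, Fin.sum_univ_two]
  ring

theorem vecCons_coords_eq_zero_iff (A : ℝ) (b : Pt) (c : ℝ) :
    ![A, b 0, b 1, c] = 0 ↔ (A, b, c) = 0 := by
  simp [funext_iff, Fin.forall_fin_succ, PiLp.ext_iff (x := b), and_assoc]

theorem onCommonCircleOrLine_iff_det_inCircleMatrix_eq_zero (p : Fin 4 → Pt) :
    OnCommonCircleOrLine p ↔ (inCircleMatrix p).det = 0 := by
  rw [onCommonCircleOrLine_iff_cospherical_or_collinear,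
    cospherical_or_collinear_iff_exists_quadric, ← exists_mulVec_eq_zero_iff]
  constructor
  · rintro ⟨A, b, c, hne, h⟩
    refine ⟨_, (vecCons_coords_eq_zero_iff A b c).not.2 hne, ?_⟩
    simpa [inCircleMatrix_mulVec, funext_iff] using h
  · rintro ⟨w, hw, h⟩
    obtain ⟨A, b, c, rfl⟩ : ∃ A b c, ![A, b 0, b 1, c] = w :=
      ⟨w 0, !₂[w 1, w 2], w 3, by ext j; fin_cases j <;> rfl⟩
    refine ⟨A, b, c, (vecCons_coords_eq_zero_iff A b c).not.1 hw, ?_⟩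
    simpa [inCircleMatrix_mulVec, funext_iff] using h

def movingInCircleMatrix (a v : Fin 4 → Pt) : Matrix (Fin 4) (Fin 4) ℝ[X] :=
  Matrix.of fun i => ![C (2 * ⟪a i, v i⟫) * X + C (‖a i‖ ^ 2), C (v i 0) * X + C (a i 0),
    C (v i 1) * X + C (a i 1), 1]

theorem eval_det_movingInCircleMatrix {a v : Fin 4 → Pt} (hv : ∀ i, ‖v i‖ = 1) (t : ℝ) :
    (movingInCircleMatrix a v).det.eval t = (inCircleMatrix fun i => a i + t • v i).det := by
  rw [← det_updateCol_add_smul_self _ (show (0 : Fin 4) ≠ 3 by decide) (-t ^ 2),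
    ← coe_evalRingHom, RingHom.map_det]
  congr 1
  ext i j
  fin_cases j <;> simp [movingInCircleMatrix, inCircleMatrix, norm_add_sq_real,
    norm_smul, inner_smul_right, hv] <;> ring

theorem natDegree_det_movingInCircleMatrix_le (a v : Fin 4 → Pt) :
    (movingInCircleMatrix a v).det.natDegree ≤ 3 := by
  refine (natDegree_det_le_sum _ ![1, 1, 1, 0] fun i j => ?_).trans (by simp [Fin.sum_univ_four])
  fin_cases j
  exacts [natDegree_linear_le, natDegree_linear_le, natDegree_linear_le, natDegree_one.le]

theorem stmt2 (a v : Fin 4 → Pt) (hv : ∀ i, ‖v i‖ = 1) :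
    (∀ t : ℝ, OnCommonCircleOrLine fun i => a i + t • v i) ∨
      ∃ S : Finset ℝ, S.card ≤ 3 ∧
        ∀ t : ℝ, (OnCommonCircleOrLine fun i => a i + t • v i) → t ∈ S := by
  simp only [onCommonCircleOrLine_iff_det_inCircleMatrix_eq_zero,
    ← eval_det_movingInCircleMatrix hv]
  by_cases hD : (movingInCircleMatrix a v).det = 0
  · exact .inl fun t => by rw [hD, eval_zero]
  · refine .inr ⟨(movingInCircleMatrix a v).det.roots.toFinset, ?_, fun t ht => ?_⟩
    · exact (Multiset.toFinset_card_le _).trans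
        ((card_roots' _).trans (natDegree_det_movingInCircleMatrix_le a v))
    · simpa [hD] using ht
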